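/- Let K be the Poisson kernel of a C_0-contraction [T_1,…,T_n]. Then for each i and each h ∈ H, (S_i* ⊗ I) K h = K T_i* h, where S_i are the left creation operators on the full Fock space. Consequently K* (S_α S_β* ⊗ I) K = T_α T_β* for all words α, β. -/

import Mathlib

/-- The operator `T_α` associated to a word `α`. -/
noncomputable def wordOp {n : ℕ} {H : Type} [NormedAddCommGroup H]
    [InnerProductSpace ℂ H] (T : Fin n → H →L[ℂ] H) (w : List (Fin n)) :
    H →L[ℂ] H :=
  (w.map T).prod

open ContinuousLinearMap Finset

private lemma coe_bridge (x : ℝ) : (RCLike.ofReal x : ℂ) = (x : ℂ) := rfl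

private lemma wordOp_append {n : ℕ} {H : Type} [NormedAddCommGroup H]
    [InnerProductSpace ℂ H] (T : Fin n → H →L[ℂ] H) (a b : List (Fin n)) :
    wordOp T (a ++ b) = wordOp T a * wordOp T b := by
  simp [wordOp]

private lemma adjoint_wordOp_append {n : ℕ} {H : Type} [NormedAddCommGroup H]
    [InnerProductSpace ℂ H] [CompleteSpace H] (T : Fin n → H →L[ℂ] H)
    (a b : List (Fin n)) (x : H) :
    adjoint (wordOp T (a ++ b)) x = adjoint (wordOp T b) (adjoint (wordOp T a) x) := by
  rw [wordOp_append, ← star_eq_adjoint, star_mul]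
  simp [star_eq_adjoint]

private lemma adjoint_wordOp_snoc {n : ℕ} {H : Type} [NormedAddCommGroup H]
    [InnerProductSpace ℂ H] [CompleteSpace H] (T : Fin n → H →L[ℂ] H)
    (w : List (Fin n)) (i : Fin n) (x : H) :
    adjoint (wordOp T (w ++ [i])) x = adjoint (T i) (adjoint (wordOp T w) x) := by
  rw [adjoint_wordOp_append]
  simp [wordOp]

private lemma key_hasSum (n : ℕ) {H : Type} [NormedAddCommGroup H]
    [InnerProductSpace ℂ H] [CompleteSpace H] (T : Fin n → H →L[ℂ] H)
    (hC0 : ∀ h : H,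
      Filter.Tendsto
        (fun k : ℕ =>
          (∑ f : Fin k → Fin n,
            wordOp T (List.ofFn f) *
              ContinuousLinearMap.adjoint (wordOp T (List.ofFn f))) h)
        Filter.atTop (nhds 0))
    (Δ : H →L[ℂ] H) (hΔsa : IsSelfAdjoint Δ)
    (hΔ2 : Δ * Δ =
      (1 : H →L[ℂ] H) - ∑ i, T i * ContinuousLinearMap.adjoint (T i))
    (h g : H) :
    HasSum
      (fun w : List (Fin n) =>
        (inner ℂ (Δ (adjoint (wordOp T w) h)) (Δ (adjoint (wordOp T w) g)) : ℂ))
      (inner ℂ h g) := by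
  classical
  set q : H → H → List (Fin n) → ℂ :=
    fun x y w => inner ℂ (adjoint (wordOp T w) x) (adjoint (wordOp T w) y) with hq
  set F : H → H → List (Fin n) → ℂ :=
    fun x y w => inner ℂ (Δ (adjoint (wordOp T w) x)) (Δ (adjoint (wordOp T w) y)) with hF
  have hΔadj : adjoint Δ = Δ := by rw [← star_eq_adjoint]; exact hΔsa
  have hΔ2' : ∀ b : H, Δ (Δ b) = b - ∑ i, T i (adjoint (T i) b) := by
    intro b
    have := congrArg (fun M : H →L[ℂ] H => M b) hΔ2
    simpa [mul_apply, sub_apply, one_apply, ContinuousLinearMap.sum_apply] using this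
  have hpt : ∀ x y w, F x y w = q x y w - ∑ i, q x y (w ++ [i]) := by
    intro x y w
    have h1 : F x y w
        = inner ℂ (adjoint (wordOp T w) x) (Δ (Δ (adjoint (wordOp T w) y))) := by
      simp only [hF]
      conv_lhs => rw [show Δ (adjoint (wordOp T w) x)
        = adjoint Δ (adjoint (wordOp T w) x) by rw [hΔadj]]
      rw [adjoint_inner_left]
    rw [h1, hΔ2' (adjoint (wordOp T w) y), inner_sub_right, inner_sum]
    congr 1
    refine Finset.sum_congr rfl fun i _ => ?_
    simp only [hq, adjoint_wordOp_snoc]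
    rw [← adjoint_inner_left]
  set Sq : H → H → ℕ → ℂ :=
    fun x y k => ∑ f : Fin k → Fin n, q x y (List.ofFn f) with hSq
  have hq_op : ∀ x y w, q x y w = inner ℂ x ((wordOp T w * adjoint (wordOp T w)) y) := by
    intro x y w
    simp only [hq]
    rw [adjoint_inner_left]
    rfl
  have hSq_op : ∀ x y k, Sq x y k
      = inner ℂ x ((∑ f : Fin k → Fin n,
          wordOp T (List.ofFn f) * adjoint (wordOp T (List.ofFn f))) y) := by
    intro x y k
    simp only [hSq, hq_op]
    rw [← inner_sum]
    congr 1
    simp [ContinuousLinearMap.sum_apply]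
  have hSq0 : ∀ x y, Filter.Tendsto (Sq x y) Filter.atTop (nhds 0) := by
    intro x y
    rw [show Sq x y = fun k : ℕ => (inner ℂ x ((∑ f : Fin k → Fin n,
        wordOp T (List.ofFn f) * adjoint (wordOp T (List.ofFn f))) y) : ℂ) from
      funext (hSq_op x y)]
    simpa [inner_sum] using (Filter.Tendsto.inner (𝕜 := ℂ) (tendsto_const_nhds (x := x)) (hC0 y))
  have hSq_zero : ∀ x y, Sq x y 0 = inner ℂ x y := by
    intro x y
    simp only [hSq]
    rw [Fintype.sum_unique]
    have h2 : adjoint (1 : H →L[ℂ] H) = 1 := by rw [← star_eq_adjoint, star_one]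
    simp [hq, wordOp, h2]
  set W : ℕ → Finset (List (Fin n)) :=
    fun m => Finset.image (List.ofFn) (Finset.univ : Finset (Fin m → Fin n)) with hW
  have hWsum : ∀ (φ : List (Fin n) → ℂ) (m : ℕ),
      ∑ w ∈ W m, φ w = ∑ f : Fin m → Fin n, φ (List.ofFn f) := by
    intro φ m
    simp only [hW]
    exact Finset.sum_image fun a _ b _ hab => List.ofFn_injective hab
  have hWlen : ∀ {m : ℕ} {w : List (Fin n)}, w ∈ W m → w.length = m := by
    intro m w hw
    simp only [hW] at hw
    obtain ⟨f, -, rfl⟩ := Finset.mem_image.mp hw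
    simp
  have hsnoc_sum : ∀ x y m, (∑ f : Fin m → Fin n, ∑ i : Fin n, q x y (List.ofFn f ++ [i]))
      = Sq x y (m + 1) := by
    intro x y m
    simp only [hSq]
    calc (∑ f : Fin m → Fin n, ∑ i : Fin n, q x y (List.ofFn f ++ [i]))
        = ∑ p : (Fin m → Fin n) × Fin n, q x y (List.ofFn p.1 ++ [p.2]) :=
          (Fintype.sum_prod_type (f := fun p : (Fin m → Fin n) × Fin n =>
            q x y (List.ofFn p.1 ++ [p.2]))).symm
      _ = ∑ f : Fin (m + 1) → Fin n, q x y (List.ofFn f) := by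
          refine Fintype.sum_equiv
            ((Equiv.prodComm (Fin m → Fin n) (Fin n)).trans (Fin.snocEquiv fun _ => Fin n))
            _ _ fun p => ?_
          have he : List.ofFn
              (((Equiv.prodComm (Fin m → Fin n) (Fin n)).trans
                (Fin.snocEquiv fun _ => Fin n)) p)
              = List.ofFn p.1 ++ [p.2] := by
            rw [List.ofFn_succ']
            simp [Fin.snocEquiv, List.concat_eq_append]
          rw [he]
  have hlevel : ∀ x y m, ∑ w ∈ W m, F x y w = Sq x y m - Sq x y (m + 1) := by
    intro x y m
    rw [hWsum]
    simp only [hpt]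
    rw [Finset.sum_sub_distrib, hsnoc_sum]
  set Fk : ℕ → Finset (List (Fin n)) := fun k => (Finset.range k).biUnion W with hFk
  have hdisj : ∀ k, (↑(Finset.range k) : Set ℕ).PairwiseDisjoint W := by
    intro k a _ b _ hab
    refine Finset.disjoint_left.mpr fun w hwa hwb => ?_
    exact hab ((hWlen hwa).symm.trans (hWlen hwb))
  have hFksum : ∀ x y k, ∑ w ∈ Fk k, F x y w = inner ℂ x y - Sq x y k := by
    intro x y k
    rw [hFk]
    rw [Finset.sum_biUnion (hdisj k)]
    simp only [hlevel]
    rw [Finset.sum_range_sub' (fun m => Sq x y m), hSq_zero]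
  have hFkmem : ∀ (w : List (Fin n)) (k : ℕ), w.length < k → w ∈ Fk k := by
    intro w k hk
    simp only [hFk]
    refine Finset.mem_biUnion.mpr ⟨w.length, Finset.mem_range.mpr hk, ?_⟩
    simp only [hW]
    exact Finset.mem_image.mpr ⟨w.get, Finset.mem_univ _, List.ofFn_get w⟩
  have hFkmono : Monotone Fk := fun a b hab =>
    Finset.biUnion_subset_biUnion_of_subset_left _ (Finset.range_subset_range.mpr hab)
  have hFktop : Filter.Tendsto Fk Filter.atTop Filter.atTop :=
    Filter.tendsto_atTop_finset_of_monotone hFkmono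
      fun w => ⟨w.length + 1, hFkmem w _ (Nat.lt_succ_self _)⟩
  have hFtend : ∀ x y, Filter.Tendsto (fun k => ∑ w ∈ Fk k, F x y w)
      Filter.atTop (nhds (inner ℂ x y)) := by
    intro x y
    simp only [hFksum]
    simpa using tendsto_const_nhds.sub (hSq0 x y)
  set r : H → List (Fin n) → ℝ := fun x w => ‖Δ (adjoint (wordOp T w) x)‖ ^ 2 with hr
  have hrF : ∀ x w, ((r x w : ℝ) : ℂ) = F x x w := by
    intro x w
    simp only [hF, hr, inner_self_eq_norm_sq_to_K, coe_bridge]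
    push_cast
    ring
  have hq_diag : ∀ x w, q x x w = ((‖adjoint (wordOp T w) x‖ ^ 2 : ℝ) : ℂ) := by
    intro x w
    simp only [hq, inner_self_eq_norm_sq_to_K, coe_bridge]
    push_cast
    ring
  have hbound : ∀ (x : H) (u : Finset (List (Fin n))), ∑ w ∈ u, r x w ≤ ‖x‖ ^ 2 := by
    intro x u
    set k : ℕ := (u.sup List.length) + 1 with hk
    have husub : u ⊆ Fk k := fun w hw =>
      hFkmem w k (Nat.lt_succ_of_le (Finset.le_sup hw))
    have h1 : ∑ w ∈ u, r x w ≤ ∑ w ∈ Fk k, r x w :=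
      Finset.sum_le_sum_of_subset_of_nonneg husub fun w _ _ => sq_nonneg _
    have h2 : (∑ w ∈ Fk k, r x w)
        = ‖x‖ ^ 2 - ∑ f : Fin k → Fin n, ‖adjoint (wordOp T (List.ofFn f)) x‖ ^ 2 := by
      have hc : ((∑ w ∈ Fk k, r x w : ℝ) : ℂ)
          = (((‖x‖ ^ 2 - ∑ f : Fin k → Fin n,
              ‖adjoint (wordOp T (List.ofFn f)) x‖ ^ 2 : ℝ)) : ℂ) := by
        push_cast
        calc (∑ w ∈ Fk k, ((r x w : ℝ) : ℂ))
            = ∑ w ∈ Fk k, F x x w := Finset.sum_congr rfl fun w _ => hrF x w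
          _ = inner ℂ x x - Sq x x k := hFksum x x k
          _ = _ := by
              simp only [hSq, hq_diag, inner_self_eq_norm_sq_to_K, coe_bridge]
              push_cast
              ring
      exact_mod_cast hc
    calc ∑ w ∈ u, r x w ≤ ∑ w ∈ Fk k, r x w := h1
      _ = _ := h2
      _ ≤ ‖x‖ ^ 2 := sub_le_self _ (Finset.sum_nonneg fun f _ => sq_nonneg _)
  have hrsum : ∀ x : H, Summable (r x) := fun x =>
    summable_of_sum_le (fun w => sq_nonneg _) (hbound x)
  have hFsummable : Summable (F h g) := by
    refine Summable.of_norm (Summable.of_nonneg_of_le (fun w => norm_nonneg _)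
      (fun w => ?_) (((hrsum h).add (hrsum g)).div_const 2))
    have hcs : ‖F h g w‖ ≤ ‖Δ (adjoint (wordOp T w) h)‖ * ‖Δ (adjoint (wordOp T w) g)‖ := by
      simp only [hF]
      exact norm_inner_le_norm _ _
    simp only [hr, Pi.add_apply]
    nlinarith [sq_nonneg (‖Δ (adjoint (wordOp T w) h)‖ - ‖Δ (adjoint (wordOp T w) g)‖),
      norm_nonneg (Δ (adjoint (wordOp T w) h)), norm_nonneg (Δ (adjoint (wordOp T w) g))]
  have hhs : HasSum (F h g) (∑' w, F h g w) := hFsummable.hasSum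
  have hhs' : Filter.Tendsto (fun s : Finset (List (Fin n)) => ∑ w ∈ s, F h g w)
      Filter.atTop (nhds (∑' w, F h g w)) := hhs
  have htend2 : Filter.Tendsto (fun k => ∑ w ∈ Fk k, F h g w)
      Filter.atTop (nhds (∑' w, F h g w)) := hhs'.comp hFktop
  have heq : (inner ℂ h g : ℂ) = ∑' w, F h g w :=
    tendsto_nhds_unique (hFtend h g) htend2
  exact heq ▸ hhs

/-- Let `K h = ∑_α e_α ⊗ Δ T_α* h` be the Poisson kernel of a
`C₀`-contraction, whose component at the word `w` is `κ h w = Δ T_w* h`.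
Then `(Sᵢ* ⊗ I) K h = K Tᵢ* h` (componentwise: `κ h (i :: w) = κ (Tᵢ* h) w`),
and consequently `K* (S_α S_β* ⊗ I) K = T_α T_β*`, expressed as the sum
formula `∑_w ⟪κ T_β* h (w), κ g (α ++ w)⟫ = ⟪T_α T_β* h, g⟫`. -/
theorem poissonKernel_intertwining_and_compression
    (n : ℕ) {H : Type} [NormedAddCommGroup H] [InnerProductSpace ℂ H]
    [CompleteSpace H] (T : Fin n → H →L[ℂ] H)
    (hrow : ((1 : H →L[ℂ] H) -
        ∑ i, T i * ContinuousLinearMap.adjoint (T i)).IsPositive)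
    (hC0 : ∀ h : H,
      Filter.Tendsto
        (fun k : ℕ =>
          (∑ f : Fin k → Fin n,
            wordOp T (List.ofFn f) *
              ContinuousLinearMap.adjoint (wordOp T (List.ofFn f))) h)
        Filter.atTop (nhds 0))
    (Δ : H →L[ℂ] H) (hΔsa : IsSelfAdjoint Δ) (hΔpos : Δ.IsPositive)
    (hΔ2 : Δ * Δ =
      (1 : H →L[ℂ] H) - ∑ i, T i * ContinuousLinearMap.adjoint (T i)) :
    (∀ (i : Fin n) (h : H) (w : List (Fin n)),
        Δ (ContinuousLinearMap.adjoint (wordOp T (i :: w)) h) =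
          Δ (ContinuousLinearMap.adjoint (wordOp T w)
              (ContinuousLinearMap.adjoint (T i) h))) ∧
      ∀ (α β : List (Fin n)) (h g : H),
        HasSum
          (fun w : List (Fin n) =>
            (inner ℂ (Δ (ContinuousLinearMap.adjoint (wordOp T (β ++ w)) h))
              (Δ (ContinuousLinearMap.adjoint (wordOp T (α ++ w)) g)) : ℂ))
          (inner ℂ
            ((wordOp T α * ContinuousLinearMap.adjoint (wordOp T β)) h) g) := by
  constructor
  · intro i h w
    congr 1
    have hcons : wordOp T (i :: w) = T i * wordOp T w := by simp [wordOp]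
    rw [hcons, ← star_eq_adjoint, star_mul]
    simp [star_eq_adjoint, mul_apply]
  · intro α β h g
    have hk := key_hasSum n T hC0 Δ hΔsa hΔ2
      (ContinuousLinearMap.adjoint (wordOp T β) h)
      (ContinuousLinearMap.adjoint (wordOp T α) g)
    have hfun : (fun w : List (Fin n) =>
        (inner ℂ (Δ (ContinuousLinearMap.adjoint (wordOp T (β ++ w)) h))
          (Δ (ContinuousLinearMap.adjoint (wordOp T (α ++ w)) g)) : ℂ))
        = fun w : List (Fin n) =>
          (inner ℂ (Δ (ContinuousLinearMap.adjoint (wordOp T w)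
              (ContinuousLinearMap.adjoint (wordOp T β) h)))
            (Δ (ContinuousLinearMap.adjoint (wordOp T w)
              (ContinuousLinearMap.adjoint (wordOp T α) g))) : ℂ) := by
      funext w
      rw [adjoint_wordOp_append, adjoint_wordOp_append]
    have hval : (inner ℂ
          ((wordOp T α * ContinuousLinearMap.adjoint (wordOp T β)) h) g : ℂ)
        = inner ℂ (ContinuousLinearMap.adjoint (wordOp T β) h)
            (ContinuousLinearMap.adjoint (wordOp T α) g) := by
      rw [ContinuousLinearMap.mul_apply, ← ContinuousLinearMap.adjoint_inner_right]
    rw [hfun, hval]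
    exact hk
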